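/- arXiv:1404.3621 — 5 statements merged into one kernel-verified Lean document; each statement's English description precedes it below -/
import Mathlib

section
/- Let G be a finite group and A a group acting on G via automorphisms. For all positive integers i, j, the commutator subgroup [γ_i(G,A), γ_j(A)] is contained in γ_{i+j}(G,A), where γ_j(A) is the j-th term of the lower central series of A. -/
open SemidirectProduct
open scoped commutatorElement

/-- Left-normed commutator `[x, l₁, l₂, …]`. -/
def lnc {S : Type*} [Group S] (x : S) (l : List S) : S :=
  l.foldl (fun c y => ⁅c, y⁆) x

/-- `γ_k(G,A)`: the subgroup of the semidirect product `G ⋊[φ] A` generated by all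
left-normed commutators `[x₁,…,xₙ]` with `n ≥ k`, `x₁ ∈ G`, each `xᵢ ∈ G ∪ A`,
and at least `k-1` of the `xᵢ` in `A`. -/
def gammaGA {G A : Type*} [Group G] [Group A] (φ : A →* MulAut G) (k : ℕ) :
    Subgroup (G ⋊[φ] A) :=
  Subgroup.closure {x | ∃ (g : G) (l : List (G ⋊[φ] A)),
      k ≤ l.length + 1 ∧
      (∀ y ∈ l, (∃ h : G, y = inl h) ∨ (∃ a : A, y = inr a)) ∧
      (∃ s : Finset (Fin l.length), k - 1 ≤ s.card ∧
        ∀ i ∈ s, ∃ a : A, l.get i = inr a) ∧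
      x = lnc (inl g) l}

/-! `[γ_k(G,A), A] ≤ γ_{k+1}(G,A)` holds on generators, since appending an entry of `A` to a
left-normed commutator raises its level, and hence everywhere because the `γ_k(G,A)` are normal
in `G ⋊ A`. Induction on `j` then goes through the three subgroups lemma applied to
`γ_i(G,A)`, `γ_j(A)` and `A`, modulo the normal subgroup `γ_{i+j+1}(G,A)`. -/

lemma lnc_append_singleton {S : Type*} [Group S] (x : S) (l : List S) (t : S) :
    lnc x (l ++ [t]) = ⁅lnc x l, t⁆ := by
  simp [lnc, List.foldl_append]

lemma List.exists_finset_append_singleton {α : Type*} {P : α → Prop} {l : List α}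
    {s : Finset (Fin l.length)} (hs : ∀ i ∈ s, P (l.get i)) (t : α) :
    ∃ s' : Finset (Fin (l ++ [t]).length),
      s.card ≤ s'.card ∧ (P t → s.card < s'.card) ∧ ∀ i ∈ s', P ((l ++ [t]).get i) := by
  have hle : l.length ≤ (l ++ [t]).length := by simp
  have hmap : ∀ i ∈ s.map (Fin.castLEEmb hle), P ((l ++ [t]).get i) := by
    simp only [Finset.mem_map, List.get_eq_getElem]
    rintro _ ⟨j, hj, rfl⟩
    simpa [List.getElem_append_left j.isLt] using hs j hj
  by_cases ht : P t
  · let last : Fin (l ++ [t]).length := ⟨l.length, by simp⟩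
    have hlast : last ∉ s.map (Fin.castLEEmb hle) := by
      simp [last, Fin.ext_iff, (Fin.is_lt _).ne]
    have hcard : (insert last (s.map (Fin.castLEEmb hle))).card = s.card + 1 := by
      simp [Finset.card_insert_of_notMem hlast]
    refine ⟨insert last (s.map (Fin.castLEEmb hle)), by omega, fun _ => by omega, ?_⟩
    simp only [Finset.mem_insert, forall_eq_or_imp]
    exact ⟨by simpa [last] using ht, hmap⟩
  · exact ⟨s.map (Fin.castLEEmb hle), by simp, fun h => absurd h ht, hmap⟩

namespace Subgroup

variable {P : Type*} [Group P]

theorem commutatorElement_mem_of_le_normalizer {N : Subgroup P} {S : Set P} {t : P}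
    (hS : closure S ≤ normalizer (N : Set P)) (h : ∀ s ∈ S, ⁅s, t⁆ ∈ N) {x : P}
    (hx : x ∈ closure S) : ⁅x, t⁆ ∈ N := by
  induction hx using closure_induction with
  | mem s hs => exact h s hs
  | one => simp
  | mul y z hy _ py pz =>
      rw [show ⁅y * z, t⁆ = y * ⁅z, t⁆ * y⁻¹ * ⁅y, t⁆ by group]
      exact mul_mem ((mem_normalizer_iff.1 (hS hy) _).1 pz) py
  | inv y hy py =>
      rw [show ⁅y⁻¹, t⁆ = y⁻¹ * ⁅y, t⁆⁻¹ * y⁻¹⁻¹ by group]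
      exact (mem_normalizer_iff.1 (hS (inv_mem hy)) _).1 (inv_mem py)

theorem commutator_commutator_le_of_rotate (M H₁ H₂ H₃ : Subgroup P) [M.Normal]
    (h1 : ⁅⁅H₂, H₃⁆, H₁⁆ ≤ M) (h2 : ⁅⁅H₃, H₁⁆, H₂⁆ ≤ M) : ⁅⁅H₁, H₂⁆, H₃⁆ ≤ M := by
  have hle : ∀ X : Subgroup P, X ≤ M ↔ X.map (QuotientGroup.mk' M) = ⊥ := fun X => by
    rw [map_eq_bot_iff, QuotientGroup.ker_mk']
  rw [hle, map_commutator, map_commutator] at h1 h2 ⊢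
  exact commutator_commutator_eq_bot_of_rotate h1 h2

end Subgroup

section GammaGA

variable {G A : Type*} [Group G] [Group A] (φ : A →* MulAut G)

def gammaGenerators (k : ℕ) : Set (G ⋊[φ] A) :=
  {x | ∃ (g : G) (l : List (G ⋊[φ] A)),
      k ≤ l.length + 1 ∧
      (∀ y ∈ l, (∃ h : G, y = inl h) ∨ (∃ a : A, y = inr a)) ∧
      (∃ s : Finset (Fin l.length), k - 1 ≤ s.card ∧
        ∀ i ∈ s, ∃ a : A, l.get i = inr a) ∧
      x = lnc (inl g) l}

lemma gammaGA_antitone : Antitone (gammaGA φ) := fun _ _ hkm =>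
  Subgroup.closure_mono <| by
    rintro x ⟨g, l, hlen, hl, ⟨s, hs, hsA⟩, rfl⟩
    exact ⟨g, l, hkm.trans hlen, hl, ⟨s, (Nat.sub_le_sub_right hkm 1).trans hs, hsA⟩, rfl⟩

variable {φ}

lemma commutatorElement_mem_gammaGenerators {k : ℕ} {x t : G ⋊[φ] A}
    (hx : x ∈ gammaGenerators φ k) (ht : (∃ h : G, t = inl h) ∨ (∃ a : A, t = inr a)) :
    ⁅x, t⁆ ∈ gammaGenerators φ k ∧
      ((∃ a : A, t = inr a) → ⁅x, t⁆ ∈ gammaGenerators φ (k + 1)) := by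
  obtain ⟨g, l, hlen, hl, ⟨s, hs, hsA⟩, rfl⟩ := hx
  obtain ⟨s', hss', hss'A, hs'A⟩ := 
    List.exists_finset_append_singleton (P := fun y => ∃ a : A, y = inr a) hsA t
  have hl' : ∀ y ∈ l ++ [t], (∃ h : G, y = inl h) ∨ (∃ a : A, y = inr a) := by
    simpa [or_imp, forall_and] using ⟨hl, ht⟩
  have hlen' : (l ++ [t]).length = l.length + 1 := by simp
  rw [← lnc_append_singleton]
  exact ⟨⟨g, _, by omega, hl', ⟨s', by omega, hs'A⟩, rfl⟩,
    fun htA => ⟨g, _, by omega, hl', ⟨s', by have := hss'A htA; omega, hs'A⟩, rfl⟩⟩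

lemma commutatorElement_mem_gammaGA {k : ℕ} {x t : G ⋊[φ] A} (hx : x ∈ gammaGA φ k)
    (ht : (∃ h : G, t = inl h) ∨ (∃ a : A, t = inr a)) : ⁅x, t⁆ ∈ gammaGA φ k :=
  Subgroup.commutatorElement_mem_of_le_normalizer Subgroup.le_normalizer
    (fun _ hs => Subgroup.subset_closure (commutatorElement_mem_gammaGenerators hs ht).1) hx

instance gammaGA_normal (k : ℕ) : (gammaGA φ k).Normal := by
  have hconj : ∀ t : G ⋊[φ] A, ((∃ h : G, t = inl h) ∨ (∃ a : A, t = inr a)) →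
      ∀ y ∈ gammaGA φ k, t * y * t⁻¹ ∈ gammaGA φ k := fun t ht y hy => by
    rw [show t * y * t⁻¹ = y * ⁅y⁻¹, t⁆ by group]
    exact mul_mem hy (commutatorElement_mem_gammaGA (inv_mem hy) ht)
  refine ⟨fun y hy z => ?_⟩
  rw [← inl_left_mul_inr_right z,
    show inl z.left * inr z.right * y * (inl z.left * inr z.right)⁻¹
      = inl z.left * (inr z.right * y * (inr z.right)⁻¹) * (inl z.left)⁻¹ by group]
  exact hconj _ (.inl ⟨_, rfl⟩) _ (hconj _ (.inr ⟨_, rfl⟩) y hy)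

lemma commutatorElement_inr_mem_gammaGA_succ {k : ℕ} {x : G ⋊[φ] A} (hx : x ∈ gammaGA φ k)
    (a : A) : ⁅x, inr a⁆ ∈ gammaGA φ (k + 1) :=
  Subgroup.commutatorElement_mem_of_le_normalizer
    (le_top.trans_eq (Subgroup.normalizer_eq_top (gammaGA φ (k + 1))).symm)
    (fun _ hs => Subgroup.subset_closure
      ((commutatorElement_mem_gammaGenerators hs (.inr ⟨a, rfl⟩)).2 ⟨a, rfl⟩)) hx

variable (φ)

lemma commutator_gammaGA_map_inr_le (k : ℕ) (H : Subgroup A) :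
    ⁅gammaGA φ k, H.map (inr : A →* G ⋊[φ] A)⁆ ≤ gammaGA φ (k + 1) := by
  rw [Subgroup.commutator_le]
  rintro x hx _ ⟨a, -, rfl⟩
  exact commutatorElement_inr_mem_gammaGA_succ hx a

theorem commutator_gammaGA_lowerCentralSeries_le (n i : ℕ) :
    ⁅gammaGA φ i, ((⊤ : Subgroup A).lowerCentralSeries n).map (inr : A →* G ⋊[φ] A)⁆
      ≤ gammaGA φ (i + n + 1) := by
  induction n generalizing i with
  | zero => exact commutator_gammaGA_map_inr_le φ i _
  | succ n ih =>
    set A' := (⊤ : Subgroup A).map (inr : A →* G ⋊[φ] A)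
    set Γ := ((⊤ : Subgroup A).lowerCentralSeries n).map (inr : A →* G ⋊[φ] A)
    change ⁅gammaGA φ i, (⁅_, ⊤⁆ : Subgroup A).map inr⁆ ≤ _
    rw [Subgroup.map_commutator, Subgroup.commutator_comm]
    apply Subgroup.commutator_commutator_le_of_rotate
    · calc ⁅⁅A', gammaGA φ i⁆, Γ⁆
          ≤ ⁅gammaGA φ (i + 1), Γ⁆ := by
            rw [Subgroup.commutator_comm A']
            exact Subgroup.commutator_mono (commutator_gammaGA_map_inr_le φ i _) le_rfl
        _ ≤ gammaGA φ (i + (n + 1) + 1) := by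
            simpa [Nat.add_right_comm, Nat.add_assoc] using ih (i + 1)
    · calc ⁅⁅gammaGA φ i, Γ⁆, A'⁆
          ≤ ⁅gammaGA φ (i + n + 1), A'⁆ := Subgroup.commutator_mono (ih i) le_rfl
        _ ≤ gammaGA φ (i + (n + 1) + 1) := commutator_gammaGA_map_inr_le φ _ _

end GammaGA

theorem stmt0_general {G A : Type*} [Group G] [Group A] (φ : A →* MulAut G)
    (i j : ℕ) :
    ⁅gammaGA φ i, ((⊤ : Subgroup A).lowerCentralSeries (j - 1)).map (inr : A →* G ⋊[φ] A)⁆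
      ≤ gammaGA φ (i + j) :=
  (commutator_gammaGA_lowerCentralSeries_le φ (j - 1) i).trans
    (gammaGA_antitone φ (by omega))

theorem stmt0 {G A : Type*} [Group G] [Group A] [Finite G] (φ : A →* MulAut G)
    (i j : ℕ) (hi : 1 ≤ i) (hj : 1 ≤ j) :
    ⁅gammaGA φ i, ((⊤ : Subgroup A).lowerCentralSeries (j - 1)).map (inr : A →* G ⋊[φ] A)⁆
      ≤ gammaGA φ (i + j) :=
  stmt0_general φ i j
end

section
/- Let G be a finite group and A a group acting on G via automorphisms. Then for every i ≥ 1, γ_{i+1}(G,A) is generated by the subgroups [γ_i(G,A), A, G, ..., G] (with n copies of G, n ≥ 0), i.e., γ_{i+1}(G,A) = ⟨[γ_i(G,A), A, _n G] : n ≥ 0⟩. -/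
open SemidirectProduct
open scoped commutatorElement

/-!
Both sides are normal subgroups of `G ⋊ A`. For `γ_k` this holds because appending a letter of
`G ∪ A` to a generating commutator gives another generator; for `⨆ₙ [γ_i, A, ₙG]` because
conjugating by `A` preserves every term of the series, while conjugating the `n`-th term by `G`
lands in the product of the `n`-th and `(n+1)`-st terms.

A generator `[g, x₁, …, xₘ]` of `γ_{i+1}` is then read from the right: if `xₘ ∈ A`, dropping it
leaves a generator of `γ_i`, so the element lies in `[γ_i, A]`; otherwise dropping `xₘ` leaves a
generator of `γ_{i+1}`, and commuting with `xₘ` stays inside the normal subgroup. Conversely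
`[γ_i, A] ≤ γ_{i+1}` and `γ_{i+1}` is normal.
-/

namespace List

theorem card_filter_univ_get_eq_countP {α : Type*} (p : α → Prop) [DecidablePred p]
    (l : List α) : (Finset.univ.filter fun i : Fin l.length => p (l.get i)).card = l.countP p := by
  induction l with
  | nil => rfl
  | cons a l ih =>
    rw [countP_cons, ← ih, add_comm]
    exact (Fin.card_filter_univ_succ' (fun i : Fin (l.length + 1) => p ((a :: l).get i))).trans
      (by simp only [decide_eq_true_eq]; rfl)

theorem exists_finset_le_card_iff_le_countP {α : Type*} (p : α → Prop) [DecidablePred p]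
    (l : List α) (m : ℕ) :
    (∃ s : Finset (Fin l.length), m ≤ s.card ∧ ∀ i ∈ s, p (l.get i)) ↔ m ≤ l.countP p := by
  rw [← card_filter_univ_get_eq_countP]
  constructor
  · rintro ⟨s, hm, hs⟩
    exact hm.trans (Finset.card_le_card fun i hi =>
      Finset.mem_filter.mpr ⟨Finset.mem_univ i, hs i hi⟩)
  · exact fun hm => ⟨_, hm, fun i hi => (Finset.mem_filter.mp hi).2⟩

end List

section Commutators

variable {M : Type*} [Group M]

theorem lnc_concat (x y : M) (l : List M) : lnc x (l ++ [y]) = ⁅lnc x l, y⁆ :=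
  List.foldl_concat ..

namespace Subgroup

theorem commutator_closure_le {S : Set M} {L N : Subgroup M} [hN : N.Normal]
    (h : ∀ s ∈ S, ∀ l ∈ L, ⁅s, l⁆ ∈ N) : ⁅closure S, L⁆ ≤ N := by
  rw [commutator_le]
  intro x hx l hl
  induction hx using closure_induction with
  | mem s hs => exact h s hs l hl
  | one => simp
  | mul u v _ _ hu hv =>
    rw [commutatorElement_mul_left_eq_conj_mul]
    exact mul_mem (hN.conj_mem _ hv u) hu
  | inv u _ hu =>
    rw [commutatorElement_inv_left, ← commutatorElement_inv]
    simpa using hN.conj_mem _ (inv_mem hu) u⁻¹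

theorem map_conj_closure_le {S : Set M} {y : M} (h : ∀ s ∈ S, ⁅s, y⁆ ∈ S) :
    (closure S).map (MulAut.conj y) ≤ closure S := by
  rw [MonoidHom.map_closure, closure_le]
  rintro _ ⟨s, hs, rfl⟩
  have : MulAut.conj y s = ⁅s, y⁆⁻¹ * s := by
    rw [commutatorElement_inv, ← conj_eq_commutatorElement_mul]
  rw [MonoidHom.coe_coe, this]
  exact mul_mem (inv_mem (subset_closure (h s hs))) (subset_closure hs)

theorem map_conj_le_sup_commutator (H : Subgroup M) {L : Subgroup M} {y : M} (hy : y ∈ L) :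
    H.map (MulAut.conj y) ≤ H ⊔ ⁅H, L⁆ := by
  rintro _ ⟨x, hx, rfl⟩
  have : MulAut.conj y x = ⁅x, y⁆⁻¹ * x := by
    rw [commutatorElement_inv, ← conj_eq_commutatorElement_mul]
  rw [MonoidHom.coe_coe, this]
  exact mul_mem (mem_sup_right (inv_mem (commutator_mem_commutator hx hy))) (mem_sup_left hx)

end Subgroup

end Commutators

theorem SemidirectProduct.normal_of_map_conj_le {N G : Type*} [Group N] [Group G]
    {φ : G →* MulAut N} {H : Subgroup (N ⋊[φ] G)}
    (hl : ∀ n, H.map (MulAut.conj (inl n : N ⋊[φ] G)) ≤ H)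
    (hr : ∀ g, H.map (MulAut.conj (inr g : N ⋊[φ] G)) ≤ H) : H.Normal := by
  refine ⟨fun x hx y => ?_⟩
  have : y * x * y⁻¹ = MulAut.conj (inl y.left) (MulAut.conj (inr y.right) x) := by
    rw [← MulAut.mul_apply, ← map_mul, inl_left_mul_inr_right, MulAut.conj_apply]
  rw [this]
  exact hl _ ⟨_, hr _ ⟨x, hx, rfl⟩, rfl⟩

section IteratedCommutator

variable {M : Type*} [Group M] {K : ℕ → Subgroup M} {L : Subgroup M}

theorem map_iteratedCommutator_le (hK : ∀ n, K (n + 1) = ⁅K n, L⁆) {f : M →* M}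
    (h0 : (K 0).map f ≤ K 0) (hL : L.map f ≤ L) (n : ℕ) : (K n).map f ≤ K n := by
  induction n with
  | zero => exact h0
  | succ n ih =>
    rw [hK, Subgroup.map_commutator]
    exact Subgroup.commutator_mono ih hL

theorem map_conj_iSup_iteratedCommutator_le (hK : ∀ n, K (n + 1) = ⁅K n, L⁆) {y : M}
    (hy : y ∈ L) : (⨆ n, K n).map (MulAut.conj y) ≤ ⨆ n, K n := by
  rw [Subgroup.map_iSup]
  refine iSup_le fun n => ((K n).map_conj_le_sup_commutator hy).trans ?_
  rw [← hK]
  exact sup_le (le_iSup K n) (le_iSup K (n + 1))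

end IteratedCommutator

namespace gammaGA

variable {G A : Type*} [Group G] [Group A] (φ : A →* MulAut G)

def letters : Set (G ⋊[φ] A) := {y | (∃ h : G, y = inl h) ∨ (∃ a : A, y = inr a)}

open Classical in
def generators (k : ℕ) : Set (G ⋊[φ] A) :=
  {x | ∃ (g : G) (l : List (G ⋊[φ] A)), (∀ y ∈ l, y ∈ letters φ) ∧
    k - 1 ≤ l.countP (fun y => ∃ a : A, y = inr a) ∧ x = lnc (inl g) l}

theorem eq_closure_generators (k : ℕ) :
    gammaGA φ k = Subgroup.closure (generators φ k) := by
  classical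
  refine congrArg Subgroup.closure (Set.ext fun x => exists₂_congr fun g l => ?_)
  rw [List.exists_finset_le_card_iff_le_countP (fun y => ∃ a : A, y = inr a)]
  refine and_iff_right_of_imp fun ⟨_, hk, _⟩ => ?_
  have := l.countP_le_length (p := fun y => decide (∃ a : A, y = inr a))
  omega

variable {φ}

theorem commutatorElement_mem_generators {k : ℕ} {x y : G ⋊[φ] A} (hx : x ∈ generators φ k)
    (hy : y ∈ letters φ) : ⁅x, y⁆ ∈ generators φ k := by
  obtain ⟨g, l, hl, hk, rfl⟩ := hx
  refine ⟨g, l ++ [y], ?_, ?_, (lnc_concat ..).symm⟩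
  · simpa [or_imp, forall_and] using ⟨hl, hy⟩
  · rw [List.countP_append]
    omega

theorem commutatorElement_inr_mem_generators_succ {k : ℕ} {x : G ⋊[φ] A}
    (hx : x ∈ generators φ k) (a : A) : ⁅x, inr a⁆ ∈ generators φ (k + 1) := by
  classical
  obtain ⟨g, l, hl, hk, rfl⟩ := hx
  refine ⟨g, l ++ [inr a], ?_, ?_, (lnc_concat ..).symm⟩
  · simpa [or_imp, forall_and] using ⟨hl, Or.inr ⟨a, rfl⟩⟩
  · have : [(inr a : G ⋊[φ] A)].countP (fun y => ∃ b : A, y = inr b) = 1 := by simp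
    rw [List.countP_append]
    omega

variable (φ)

theorem normal (k : ℕ) : (gammaGA φ k).Normal := by
  have hconj : ∀ y ∈ letters φ, (gammaGA φ k).map (MulAut.conj y) ≤ gammaGA φ k :=
    fun y hy => eq_closure_generators φ k ▸
      Subgroup.map_conj_closure_le fun _ hs => commutatorElement_mem_generators hs hy
  exact SemidirectProduct.normal_of_map_conj_le (fun h => hconj _ (Or.inl ⟨h, rfl⟩))
    (fun a => hconj _ (Or.inr ⟨a, rfl⟩))

theorem commutator_range_inr_le_succ (k : ℕ) :
    ⁅gammaGA φ k, (⊤ : Subgroup A).map (inr : A →* G ⋊[φ] A)⁆ ≤ gammaGA φ (k + 1) := by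
  have := normal φ (k + 1)
  rw [eq_closure_generators φ k]
  refine Subgroup.commutator_closure_le fun x hx _ ⟨a, _, ha⟩ => ?_
  rw [← ha, eq_closure_generators]
  exact Subgroup.subset_closure (commutatorElement_inr_mem_generators_succ hx a)

variable {φ} {i : ℕ} {K : ℕ → Subgroup (G ⋊[φ] A)}

theorem iSup_le_succ (hK0 : K 0 = ⁅gammaGA φ i, (⊤ : Subgroup A).map (inr : A →* G ⋊[φ] A)⁆)
    (hK : ∀ n, K (n + 1) = ⁅K n, (⊤ : Subgroup G).map (inl : G →* G ⋊[φ] A)⁆) :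
    ⨆ n, K n ≤ gammaGA φ (i + 1) := by
  have := normal φ (i + 1)
  refine iSup_le fun n => ?_
  induction n with
  | zero => exact hK0 ▸ commutator_range_inr_le_succ φ i
  | succ n ih =>
    rw [hK]
    exact (Subgroup.commutator_mono ih le_top).trans (Subgroup.commutator_le_left _ _)

theorem normal_iSup (hK0 : K 0 = ⁅gammaGA φ i, (⊤ : Subgroup A).map (inr : A →* G ⋊[φ] A)⁆)
    (hK : ∀ n, K (n + 1) = ⁅K n, (⊤ : Subgroup G).map (inl : G →* G ⋊[φ] A)⁆) :
    (⨆ n, K n).Normal := by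
  refine SemidirectProduct.normal_of_map_conj_le
    (fun h => map_conj_iSup_iteratedCommutator_le hK ⟨h, trivial, rfl⟩) (fun a => ?_)
  rw [Subgroup.map_iSup]
  refine iSup_mono fun n => map_iteratedCommutator_le hK ?_ ?_ n
  · rw [hK0, Subgroup.map_commutator, (normal φ i).map_conj_eq]
    refine Subgroup.commutator_mono le_rfl ?_
    rintro _ ⟨_, ⟨b, -, rfl⟩, rfl⟩
    exact ⟨a * b * a⁻¹, trivial, by simp⟩
  · rintro _ ⟨_, ⟨h, -, rfl⟩, rfl⟩
    exact ⟨φ a h, trivial, by simp [inl_aut]⟩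

theorem succ_le_iSup (hi : 1 ≤ i)
    (hK0 : K 0 = ⁅gammaGA φ i, (⊤ : Subgroup A).map (inr : A →* G ⋊[φ] A)⁆)
    (hK : ∀ n, K (n + 1) = ⁅K n, (⊤ : Subgroup G).map (inl : G →* G ⋊[φ] A)⁆) :
    gammaGA φ (i + 1) ≤ ⨆ n, K n := by
  classical
  have := normal_iSup hK0 hK
  rw [eq_closure_generators, Subgroup.closure_le]
  rintro _ ⟨g, l, hl, hcount, rfl⟩
  induction l using List.reverseRecOn with
  | nil =>
    rw [List.countP_nil] at hcount
    omega
  | append_singleton l y ih =>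
    rw [lnc_concat]
    rw [List.countP_append] at hcount
    have hl' : ∀ z ∈ l, z ∈ letters φ := fun z hz => hl z (List.mem_append_left _ hz)
    by_cases hy : ∃ a : A, y = inr a
    · obtain ⟨a, rfl⟩ := hy
      have : [(inr a : G ⋊[φ] A)].countP (fun y => ∃ b : A, y = inr b) = 1 := by simp
      have hc : lnc (inl g) l ∈ gammaGA φ i :=
        eq_closure_generators φ i ▸ Subgroup.subset_closure ⟨g, l, hl', by omega, rfl⟩
      exact le_iSup K 0
        (hK0 ▸ Subgroup.commutator_mem_commutator hc (Subgroup.mem_map_of_mem _ trivial))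
    · have : [y].countP (fun y => ∃ b : A, y = inr b) = 0 := by simpa using hy
      exact Subgroup.commutator_le_left _ ⊤
        (Subgroup.commutator_mem_commutator (ih hl' (by omega)) trivial)

end gammaGA

theorem stmt1_general {G A : Type*} [Group G] [Group A] (φ : A →* MulAut G)
    (i : ℕ) (hi : 1 ≤ i) :
    gammaGA φ (i + 1) =
      ⨆ n : ℕ,
        Nat.rec (motive := fun _ => Subgroup (G ⋊[φ] A))
          ⁅gammaGA φ i, (⊤ : Subgroup A).map (inr : A →* G ⋊[φ] A)⁆
          (fun _ H => ⁅H, (⊤ : Subgroup G).map (inl : G →* G ⋊[φ] A)⁆) n :=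
  le_antisymm (gammaGA.succ_le_iSup hi rfl fun _ => rfl)
    (gammaGA.iSup_le_succ rfl fun _ => rfl)

theorem stmt1 {G A : Type*} [Group G] [Group A] [Finite G] (φ : A →* MulAut G)
    (i : ℕ) (hi : 1 ≤ i) :
    gammaGA φ (i + 1) =
      ⨆ n : ℕ,
        Nat.rec (motive := fun _ => Subgroup (G ⋊[φ] A))
          ⁅gammaGA φ i, (⊤ : Subgroup A).map (inr : A →* G ⋊[φ] A)⁆
          (fun _ H => ⁅H, (⊤ : Subgroup G).map (inl : G →* G ⋊[φ] A)⁆) n :=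
  stmt1_general φ i hi
end

section
/- Let G be a finite 2-group and A a group of order 2 acting on G via automorphisms such that A fixes every element of order dividing 4 in γ_2(G,A) = [G,A]. Then [G,A] is elementary abelian (has exponent at most 2). -/
/-!
Let `a` generate `A` and write `σ = φ a`, an involutive automorphism of `G`. The commutators
`[g, a]` are the elements `d g = g (σ g)⁻¹`, and `σ` inverts each of them. An element `x` of
`[G, A]` of order `2ⁿ` inverted by `a` squares to one: by induction `x²` does, so `x⁴ = 1`, and
then `a` both fixes and inverts `x`. Hence every `d g` is an involution. Moreover
`d u (d v)⁻¹ = v · d (v⁻¹ u) · v⁻¹` is again an involution, so the `d g` commute pairwise, and a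
group generated by pairwise commuting involutions has exponent dividing `2`.
-/

open SemidirectProduct

section Involutions

variable {P : Type*} [Group P]

theorem commute_of_sq_eq_one {x y : P} (hx : x ^ 2 = 1) (hy : y ^ 2 = 1)
    (hxy : (x * y) ^ 2 = 1) : Commute x y := by
  have hx' : x⁻¹ = x := inv_eq_of_mul_eq_one_right (by rwa [← pow_two])
  have hy' : y⁻¹ = y := inv_eq_of_mul_eq_one_right (by rwa [← pow_two])
  have hxy' : (x * y)⁻¹ = x * y := inv_eq_of_mul_eq_one_right (by rwa [← pow_two])
  rw [mul_inv_rev, hx', hy'] at hxy'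
  exact hxy'.symm

theorem Subgroup.sq_eq_one_of_mem_closure {S : Set P} (hsq : ∀ s ∈ S, s ^ 2 = 1)
    (hcomm : ∀ x ∈ S, ∀ y ∈ S, x * y = y * x) {x : P} (hx : x ∈ closure S) : x ^ 2 = 1 := by
  have hcent := closure_le_centralizer_centralizer S
  induction hx using closure_induction with
  | mem s hs => exact hsq s hs
  | one => exact one_pow 2
  | mul y z hy hz hy2 hz2 =>
    have hyz : Commute y z :=
      Set.centralizer_centralizer_comm_of_comm hcomm y (hcent hy) z (hcent hz)
    rw [hyz.mul_pow, hy2, hz2, one_mul]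
  | inv y _ hy2 => rw [inv_pow, hy2, inv_one]

theorem sq_eq_one_of_conj_eq_inv {K : Subgroup P} {s : P}
    (hfix : ∀ t ∈ K, t ^ 4 = 1 → s * t * s⁻¹ = t) :
    ∀ (n : ℕ) {x : P}, x ∈ K → s * x * s⁻¹ = x⁻¹ → x ^ 2 ^ n = 1 → x ^ 2 = 1
  | 0, x, _, _, hn => by rw [pow_zero, pow_one] at hn; rw [hn, one_pow]
  | n + 1, x, hx, hinv, hn => by
    have hx4 : x ^ 4 = 1 := by
      rw [show 4 = 2 * 2 by rfl, pow_mul]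
      refine sq_eq_one_of_conj_eq_inv hfix n (pow_mem hx 2) ?_ ?_
      · rw [← conj_pow, hinv, inv_pow]
      · rwa [← pow_mul, ← pow_succ']
    have hx' : x = x⁻¹ := (hfix x hx hx4).symm.trans hinv
    rw [pow_two, ← mul_inv_cancel x, ← hx']

end Involutions

namespace MulEquiv

variable {G : Type*} [Group G] (σ : G ≃* G)

theorem mul_inv_apply_mul_inv_mul_inv_apply (u v : G) :
    u * (σ u)⁻¹ * (v * (σ v)⁻¹)⁻¹ = v * (v⁻¹ * u * (σ (v⁻¹ * u))⁻¹) * v⁻¹ := by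
  simp only [map_mul, map_inv]
  group

theorem apply_mul_inv_apply_of_involutive (hσ : Function.Involutive σ) (g : G) :
    σ (g * (σ g)⁻¹) = (g * (σ g)⁻¹)⁻¹ := by
  rw [map_mul, map_inv, hσ g, mul_inv_rev, inv_inv]

theorem commute_mul_inv_apply (hsq : ∀ g : G, (g * (σ g)⁻¹) ^ 2 = 1) (u v : G) :
    Commute (u * (σ u)⁻¹) (v * (σ v)⁻¹) := by
  refine commute_of_sq_eq_one (hsq u) (hsq v) ?_
  have hv : (v * (σ v)⁻¹)⁻¹ = v * (σ v)⁻¹ := inv_eq_of_mul_eq_one_right (by rw [← pow_two, hsq])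
  rw [← hv, mul_inv_apply_mul_inv_mul_inv_apply, conj_pow, hsq, mul_one, mul_inv_cancel]

end MulEquiv

namespace SemidirectProduct

variable {N G : Type*} [Group N] [Group G] {φ : G →* MulAut N}

open scoped commutatorElement in
theorem commutatorElement_inl_inr (n : N) (g : G) :
    ⁅(inl n : N ⋊[φ] G), (inr g : N ⋊[φ] G)⁆ = inl (n * (φ g n)⁻¹) := by
  rw [commutatorElement_def, ← map_inv (φ g) n, map_mul, inl_aut, ← map_inv inl, ← map_inv inr]
  group

theorem inl_mul_inv_mem_commutator (g : G) (n : N) :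
    (inl (n * (φ g n)⁻¹) : N ⋊[φ] G) ∈
      ⁅(⊤ : Subgroup N).map (inl : N →* N ⋊[φ] G), (⊤ : Subgroup G).map (inr : G →* N ⋊[φ] G)⁆ := by
  rw [← commutatorElement_inl_inr]
  exact Subgroup.commutator_mem_commutator (Subgroup.mem_map_of_mem _ (Subgroup.mem_top n))
    (Subgroup.mem_map_of_mem _ (Subgroup.mem_top g))

theorem commutator_le_closure_range_inl_mul_inv {a : G}
    (ha : ∀ b : G, b ≠ 1 → b = a) :
    ⁅(⊤ : Subgroup N).map (inl : N →* N ⋊[φ] G), (⊤ : Subgroup G).map (inr : G →* N ⋊[φ] G)⁆ ≤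
      Subgroup.closure (Set.range fun n => (inl (n * (φ a n)⁻¹) : N ⋊[φ] G)) := by
  rw [Subgroup.commutator_le]
  rintro _ ⟨n, -, rfl⟩ _ ⟨b, -, rfl⟩
  rw [commutatorElement_inl_inr]
  by_cases hb : b = 1
  · rw [hb, map_one, MulAut.one_apply, mul_inv_cancel, map_one]
    exact one_mem _
  · rw [ha b hb]
    exact Subgroup.subset_closure ⟨n, rfl⟩

end SemidirectProduct

theorem stmt8_general {G A : Type*} [Group G] [Group A]
    (hG : IsPGroup 2 G) (hA : Nat.card A = 2)
    (φ : A →* MulAut G)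
    (hfix : ∀ x ∈ (⁅(⊤ : Subgroup G).map (inl : G →* G ⋊[φ] A),
                    (⊤ : Subgroup A).map (inr : A →* G ⋊[φ] A)⁆ : Subgroup (G ⋊[φ] A)),
      x ^ 4 = 1 → ∀ a : A, (inr a : G ⋊[φ] A) * x * (inr a : G ⋊[φ] A)⁻¹ = x) :
    ∀ x ∈ (⁅(⊤ : Subgroup G).map (inl : G →* G ⋊[φ] A),
            (⊤ : Subgroup A).map (inr : A →* G ⋊[φ] A)⁆ : Subgroup (G ⋊[φ] A)),
      x ^ 2 = 1 := by
  obtain ⟨a, -, hA_eq⟩ := (Nat.card_eq_two_iff' (1 : A)).mp hA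
  have hσ : Function.Involutive (φ a) := fun g => by
    rw [← MulAut.mul_apply, ← map_mul, ← pow_two, ← hA, pow_card_eq_one', map_one,
      MulAut.one_apply]
  have hsq (g : G) : (g * (φ a g)⁻¹) ^ 2 = 1 := by
    obtain ⟨n, hn⟩ := hG (g * (φ a g)⁻¹)
    apply inl_injective (φ := φ)
    rw [map_pow, map_one]
    refine sq_eq_one_of_conj_eq_inv (fun t ht ht4 => hfix t ht ht4 a) n
      (inl_mul_inv_mem_commutator a g) ?_ (by rw [← map_pow, hn, map_one])
    rw [← map_inv inr, ← inl_aut, (φ a).apply_mul_inv_apply_of_involutive hσ, map_inv]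
  intro x hx
  refine Subgroup.sq_eq_one_of_mem_closure ?_ ?_
    (commutator_le_closure_range_inl_mul_inv hA_eq hx)
  · rintro _ ⟨g, rfl⟩
    rw [← map_pow, hsq, map_one]
  · rintro _ ⟨u, rfl⟩ _ ⟨v, rfl⟩
    exact ((φ a).commute_mul_inv_apply hsq u v).map inl

theorem stmt8 {G A : Type*} [Group G] [Group A] [Finite G] [Finite A]
    (hG : IsPGroup 2 G) (hA : Nat.card A = 2)
    (φ : A →* MulAut G)
    (hfix : ∀ x ∈ (⁅(⊤ : Subgroup G).map (inl : G →* G ⋊[φ] A),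
                    (⊤ : Subgroup A).map (inr : A →* G ⋊[φ] A)⁆ : Subgroup (G ⋊[φ] A)),
      x ^ 4 = 1 → ∀ a : A, (inr a : G ⋊[φ] A) * x * (inr a : G ⋊[φ] A)⁻¹ = x) :
    ∀ x ∈ (⁅(⊤ : Subgroup G).map (inl : G →* G ⋊[φ] A),
            (⊤ : Subgroup A).map (inr : A →* G ⋊[φ] A)⁆ : Subgroup (G ⋊[φ] A)),
      x ^ 2 = 1 :=
  stmt8_general hG hA φ hfix
end

section
/- Let G be a finite group, A a group acting on G via automorphisms with cyclic quotient K/[G,A] in the semidirect product K = [G,A]⋊A where A is cyclic, and suppose K is p-abelian (i.e., (xy)^p = x^p y^p for all x, y ∈ K). Then for any g ∈ G and generator σ of A of order p, the element x = [g,σ] satisfies x^{1+σ+...+σ^{p-1}} = x^p, and hence x^p = g^{-1}·σ^p(g). -/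
/-!
In `G ⋊ A` the `p`-th power of `inl x * inr σ` is `inl (x * σ(x) * ⋯ * σ^{p-1}(x)) * inr (σ ^ p)`.
For `x = [g, σ]` both factors `inl x` (a commutator of `inl g⁻¹` and `inr σ`) and `inr σ` lie in
`K`, so `p`-abelianity and `σ ^ p = 1` give `x^{1+σ+⋯+σ^{p-1}} = x ^ p`; the product on the left
telescopes to `g⁻¹ σ^p(g)`.
-/

open SemidirectProduct

namespace SemidirectProduct

variable {N G : Type*} [Group N] [Group G] {φ : G →* MulAut N}

theorem inl_mul_inr_pow (x : N) (a : G) (n : ℕ) :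
    (inl x * inr a : N ⋊[φ] G) ^ n =
      inl ((List.range n).map fun i => φ (a ^ i) x).prod * inr (a ^ n) := by
  induction n with
  | zero => simp
  | succ n ih =>
    rw [pow_succ, ih, List.prod_range_succ, map_mul, pow_succ, map_mul, inl_aut]
    simp only [mul_assoc, map_inv, inv_mul_cancel_left]

open scoped commutatorElement in
theorem commutatorElement_inl_inv_inr (x : N) (a : G) :
    ⁅(inl x⁻¹ : N ⋊[φ] G), (inr a : N ⋊[φ] G)⁆ = inl (x⁻¹ * φ a x) := by
  ext <;> simp [commutatorElement_def]

end SemidirectProduct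

theorem MulAut.prod_range_pow_apply_inv_mul_apply {G : Type*} [Group G] (f : MulAut G) (g : G)
    (n : ℕ) : ((List.range n).map fun i => (f ^ i) (g⁻¹ * f g)).prod = g⁻¹ * (f ^ n) g := by
  induction n with
  | zero => simp
  | succ n ih =>
    rw [List.prod_range_succ, ih, map_mul, map_inv, pow_succ, MulAut.mul_apply]
    group

theorem stmt9_general {G A : Type*} [Group G] [Group A]
    (p : ℕ) (φ : A →* MulAut G)
    (σ : A) (hσ : orderOf σ = p)
    (K : Subgroup (G ⋊[φ] A))
    (hK : K = ⁅(⊤ : Subgroup G).map (inl : G →* G ⋊[φ] A),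
               (⊤ : Subgroup A).map (inr : A →* G ⋊[φ] A)⁆
          ⊔ (⊤ : Subgroup A).map (inr : A →* G ⋊[φ] A))
    (hpab : ∀ x ∈ K, ∀ y ∈ K, (x * y) ^ p = x ^ p * y ^ p)
    (g : G) :
    ((List.range p).map fun i => φ (σ ^ i) (g⁻¹ * φ σ g)).prod = (g⁻¹ * φ σ g) ^ p ∧
    (g⁻¹ * φ σ g) ^ p = g⁻¹ * φ (σ ^ p) g := by
  have hσp : σ ^ p = 1 := hσ ▸ pow_orderOf_eq_one σ
  have hinr : (inr σ : G ⋊[φ] A) ∈ K :=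
    hK ▸ Subgroup.mem_sup_right (Subgroup.mem_map_of_mem _ (Subgroup.mem_top σ))
  have hinl : (inl (g⁻¹ * φ σ g) : G ⋊[φ] A) ∈ K := by
    rw [hK, ← commutatorElement_inl_inv_inr]
    exact Subgroup.mem_sup_left <| Subgroup.commutator_mem_commutator
      (Subgroup.mem_map_of_mem _ (Subgroup.mem_top _))
      (Subgroup.mem_map_of_mem _ (Subgroup.mem_top _))
  have hprod : ((List.range p).map fun i => φ (σ ^ i) (g⁻¹ * φ σ g)).prod = (g⁻¹ * φ σ g) ^ p := by
    have key := hpab _ hinl _ hinr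
    rw [inl_mul_inr_pow, ← map_pow, ← map_pow, hσp, map_one, mul_one, mul_one] at key
    exact inl_injective key
  refine ⟨hprod, ?_⟩
  simp only [← hprod, map_pow, MulAut.prod_range_pow_apply_inv_mul_apply]

theorem stmt9 {G A : Type*} [Group G] [Group A] [Finite G]
    (p : ℕ) [Fact p.Prime] (φ : A →* MulAut G)
    (σ : A) (hσ : orderOf σ = p) (hgen : ∀ a : A, a ∈ Subgroup.zpowers σ)
    (K : Subgroup (G ⋊[φ] A))
    (hK : K = ⁅(⊤ : Subgroup G).map (inl : G →* G ⋊[φ] A),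
               (⊤ : Subgroup A).map (inr : A →* G ⋊[φ] A)⁆
          ⊔ (⊤ : Subgroup A).map (inr : A →* G ⋊[φ] A))
    (hpab : ∀ x ∈ K, ∀ y ∈ K, (x * y) ^ p = x ^ p * y ^ p)
    (g : G) :
    ((List.range p).map fun i => φ (σ ^ i) (g⁻¹ * φ σ g)).prod = (g⁻¹ * φ σ g) ^ p ∧
    (g⁻¹ * φ σ g) ^ p = g⁻¹ * φ (σ ^ p) g :=
  stmt9_general p φ σ hσ K hK hpab g
end

section
/- Let p be a prime, G a finite p-group, and Q a group of automorphisms of G of order coprime to p. If Q fixes every element of order dividing p (dividing 4 if p = 2) in [G,Q], then Q is trivial. -/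
/-!
Induction on `|G|`. The hypothesis passes to every proper `Q`-invariant subgroup, which `Q`
therefore fixes pointwise. If `[G, Q] < G`, then `c = g⁻¹ σ(g)` is fixed by `σ`, so
`σ ^ n (g) = g c ^ n`; taking `n = |Q|` gives `c ^ |Q| = 1`, hence `c = 1` in the `p`-group `G`.
If `[G, Q] = G`, then every proper characteristic subgroup is fixed by `Q`, hence central, because
each `g⁻¹ σ(g)` centralizes a normal subgroup fixed by `σ`. Applied to `G'` and to the subgroup
generated by `p`-th powers, this makes `G` of class at most two with central `p`-th powers. As
`p ∣ k.choose 2` for `k = p` (`k = 4` if `p = 2`), the map `x ↦ x ^ k` is then an endomorphism,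
and `Q` fixes its image. So it kills every `g⁻¹ σ(g)`, hence all of `G = [G, Q]`, and the
hypothesis applies to every element of `G`.
-/

open Subgroup
open scoped commutatorElement

section ClassTwo

variable {G : Type*} [Group G]

theorem pow_mul_eq_commutatorElement_pow_mul_mul_pow {x y : G} (hy : Commute ⁅y, x⁆ y) (n : ℕ) :
    y ^ n * x = ⁅y, x⁆ ^ n * x * y ^ n := by
  induction n with
  | zero => simp
  | succ n ih =>
    calc y ^ (n + 1) * x = y ^ n * (y * x) := by group
      _ = y ^ n * (⁅y, x⁆ * x * y) := by rw [commutatorElement_def]; group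
      _ = ⁅y, x⁆ * (y ^ n * x) * y := by
          rw [← mul_assoc, ← mul_assoc, ← (hy.pow_right n).eq]; group
      _ = ⁅y, x⁆ ^ (n + 1) * x * y ^ (n + 1) := by rw [ih]; group

theorem mul_pow_eq_commutatorElement_pow_mul {x y : G} (hx : Commute ⁅y, x⁆ x)
    (hy : Commute ⁅y, x⁆ y) (n : ℕ) : (x * y) ^ n = ⁅y, x⁆ ^ n.choose 2 * x ^ n * y ^ n := by
  induction n with
  | zero => simp
  | succ n ih =>
    calc (x * y) ^ (n + 1) = ⁅y, x⁆ ^ n.choose 2 * x ^ n * (y ^ n * x) * y := by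
          rw [pow_succ, ih]; group
      _ = ⁅y, x⁆ ^ n.choose 2 * (x ^ n * ⁅y, x⁆ ^ n) * x * y ^ (n + 1) := by
          rw [pow_mul_eq_commutatorElement_pow_mul_mul_pow hy]; group
      _ = ⁅y, x⁆ ^ (n + 1).choose 2 * x ^ (n + 1) * y ^ (n + 1) := by
          rw [← ((hx.pow_left n).pow_right n).eq, Nat.choose_succ_succ', Nat.choose_one_right]
          group

theorem commutatorElement_pow_eq_one {x y : G} {n : ℕ} (hy : Commute ⁅y, x⁆ y)
    (hn : Commute (y ^ n) x) : ⁅y, x⁆ ^ n = 1 := by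
  have h := pow_mul_eq_commutatorElement_pow_mul_mul_pow hy n
  rw [hn.eq, mul_assoc] at h
  simpa using h

end ClassTwo

theorem Subgroup.mapsTo_closure {G : Type*} [Group G] {f : G →* G} {s : Set G}
    (h : Set.MapsTo f s s) : Set.MapsTo f (closure s) (closure s) := fun _ hx =>
  (closure_le ((closure s).comap f)).2 (fun _ hy => subset_closure (h hy)) hx

theorem Subgroup.Characteristic.mapsTo {G : Type*} [Group G] {H : Subgroup G}
    [hH : H.Characteristic] (ϕ : G ≃* G) : Set.MapsTo ϕ H H :=
  fun _ hx => characteristic_iff_le_comap.1 hH ϕ hx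

theorem Subgroup.characteristic_closure {G : Type*} [Group G] {s : Set G}
    (h : ∀ ϕ : G ≃* G, Set.MapsTo ϕ s s) : (closure s).Characteristic :=
  characteristic_iff_le_comap.2 fun ϕ => mapsTo_closure (f := ϕ.toMonoidHom) (h ϕ)

theorem MulAut.pow_apply_eq_mul_pow {G : Type*} [Group G] {σ : MulAut G} {g : G}
    (h : σ (g⁻¹ * σ g) = g⁻¹ * σ g) (n : ℕ) : (σ ^ n) g = g * (g⁻¹ * σ g) ^ n := by
  induction n with
  | zero => simp
  | succ n ih =>
    rw [pow_succ', MulAut.mul_apply, ih, map_mul, map_pow, h, pow_succ', ← mul_assoc,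
      mul_inv_cancel_left]

section Action

variable {G Q : Type*} [Group G] [Group Q]

/-- The subgroup `[G, Q]`. -/
def autCommutator (φ : Q →* MulAut G) : Subgroup G :=
  closure {x | ∃ (g : G) (σ : Q), x = g⁻¹ * φ σ g}

theorem mapsTo_autCommutator (φ : Q →* MulAut G) (τ : Q) :
    Set.MapsTo (φ τ) (autCommutator φ) (autCommutator φ) := by
  refine mapsTo_closure (f := (φ τ).toMonoidHom) ?_
  rintro _ ⟨g, σ, rfl⟩
  refine ⟨φ τ g, τ * σ * τ⁻¹, ?_⟩
  simp [MulAut.mul_apply]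

def restrictMulAut (φ : Q →* MulAut G) (M : Subgroup G) (hM : ∀ σ, Set.MapsTo (φ σ) M M) :
    Q →* MulAut M where
  toFun σ :=
    { toFun x := ⟨φ σ x, hM σ x.2⟩
      invFun x := ⟨φ σ⁻¹ x, hM σ⁻¹ x.2⟩
      left_inv x := by ext; simp [map_inv]
      right_inv x := by ext; simp [map_inv]
      map_mul' x y := by ext; simp }
  map_one' := by ext; simp
  map_mul' σ τ := by ext; simp [MulAut.mul_apply]

theorem coe_mem_autCommutator_of_mem_restrict {φ : Q →* MulAut G} {M : Subgroup G}
    {hM : ∀ σ, Set.MapsTo (φ σ) M M} {x : M} (hx : x ∈ autCommutator (restrictMulAut φ M hM)) :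
    (x : G) ∈ autCommutator φ := by
  refine (closure_le ((autCommutator φ).comap M.subtype)).2 ?_ hx
  rintro _ ⟨g, σ, rfl⟩
  exact subset_closure ⟨g, σ, rfl⟩

theorem autCommutator_le_centralizer {φ : Q →* MulAut G} {N : Subgroup G} [N.Normal]
    (hN : ∀ σ, ∀ x ∈ N, φ σ x = x) : autCommutator φ ≤ centralizer N := by
  refine (closure_le _).2 ?_
  rintro _ ⟨g, σ, rfl⟩ c hc
  have h := hN σ _ (Normal.conj_mem ‹_› c hc g)
  rw [map_mul, map_mul, map_inv, hN σ c hc] at h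
  calc c * (g⁻¹ * φ σ g) = g⁻¹ * (g * c * g⁻¹) * φ σ g := by group
    _ = g⁻¹ * φ σ g * c := by rw [← h]; group

end Action

theorem Nat.Prime.dvd_choose_two_ite {p : ℕ} (hp : p.Prime) :
    p ∣ (if p = 2 then 4 else p).choose 2 := by
  split_ifs with h
  · subst h; decide
  · have h2 : 2 ∣ p - 1 := (Nat.Odd.sub_odd (hp.odd_of_ne_two h) odd_one).two_dvd
    rw [Nat.choose_two_right, Nat.mul_div_assoc _ h2]
    exact dvd_mul_right _ _

section PGroup

variable {G : Type*} [Group G] {p : ℕ}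

theorem IsPGroup.exists_normal_index_eq [Finite G] [Nontrivial G] [hp : Fact p.Prime]
    (hG : IsPGroup p G) : ∃ N : Subgroup G, N.Normal ∧ N.index = p := by
  obtain ⟨n, hn0, hn⟩ := hG.nontrivial_iff_card.mp inferInstance
  obtain ⟨N, hN⟩ := Sylow.exists_subgroup_card_pow_prime p (hn ▸ pow_dvd_pow p (n.sub_le 1))
  have hindex : N.index = p := by
    have h := N.card_mul_index
    rw [hN, hn, ← Nat.sub_add_cancel hn0, pow_succ, Nat.add_sub_cancel] at h
    exact Nat.eq_of_mul_eq_mul_left (pow_pos hp.out.pos _) h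
  refine ⟨N, normal_of_index_eq_minFac_card ?_, hindex⟩
  rw [hindex, hn, hp.out.pow_minFac hn0.ne']

theorem IsPGroup.closure_range_pow_ne_top [Finite G] [Nontrivial G] [Fact p.Prime]
    (hG : IsPGroup p G) : closure (Set.range (· ^ p : G → G)) ≠ ⊤ := by
  obtain ⟨N, _, hN⟩ := hG.exists_normal_index_eq
  refine ne_top_of_le_ne_top (fun h => ?_) ((closure_le N).2 ?_)
  · rw [h, index_top] at hN
    exact (Fact.out : p.Prime).one_lt.ne hN
  · rintro _ ⟨x, rfl⟩
    exact hN ▸ N.pow_index_mem x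

end PGroup

section CoprimeAction

variable {G Q : Type*} [Group G] [Group Q] {p : ℕ}

theorem IsPGroup.fixes_of_fixes_autCommutator (hG : IsPGroup p G) {φ : Q →* MulAut G}
    (hcop : (Nat.card Q).Coprime p) (hH : ∀ σ, ∀ x ∈ autCommutator φ, φ σ x = x)
    (σ : Q) (g : G) : φ σ g = g := by
  have hc : g⁻¹ * φ σ g ∈ autCommutator φ := subset_closure ⟨g, σ, rfl⟩
  have hpow : (g⁻¹ * φ σ g) ^ Nat.card Q = 1 := by
    have h := MulAut.pow_apply_eq_mul_pow (hH σ _ hc) (Nat.card Q)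
    rwa [← map_pow, pow_card_eq_one', map_one, MulAut.one_apply, left_eq_mul] at h
  have hc1 : g⁻¹ * φ σ g = 1 := (hG.powEquiv hcop.symm).injective (by simpa using hpow)
  exact (inv_mul_eq_one.mp hc1).symm

theorem mul_pow_of_commutator_le_center {k : ℕ} (hcomm : commutator G ≤ center G)
    (hpow : ∀ x : G, x ^ p ∈ center G) (hk : p ∣ k.choose 2) (x y : G) :
    (x * y) ^ k = x ^ k * y ^ k := by
  have hcentral : ∀ z, Commute ⁅y, x⁆ z := fun z =>
    (mem_center_iff.mp (hcomm (commutator_mem_commutator (mem_top y) (mem_top x))) z).symm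
  have hcp : ⁅y, x⁆ ^ p = 1 :=
    commutatorElement_pow_eq_one (hcentral y) (mem_center_iff.mp (hpow y) x).symm
  obtain ⟨t, ht⟩ := hk
  rw [mul_pow_eq_commutatorElement_pow_mul (hcentral x) (hcentral y), ht, pow_mul, hcp, one_pow,
    one_mul]

theorem pow_eq_one_of_mem_autCommutator {φ : Q →* MulAut G} {k : ℕ}
    (hcomm : commutator G ≤ center G) (hpow : ∀ x : G, x ^ p ∈ center G) (hk : p ∣ k.choose 2)
    (hfix : ∀ σ x, φ σ (x ^ k) = x ^ k) : ∀ x ∈ autCommutator φ, x ^ k = 1 := by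
  let powHom : G →* G := MonoidHom.mk' (· ^ k) (mul_pow_of_commutator_le_center hcomm hpow hk)
  refine (closure_le powHom.ker).2 ?_
  rintro _ ⟨g, σ, rfl⟩
  change (g⁻¹ * φ σ g) ^ k = 1
  rw [mul_pow_of_commutator_le_center hcomm hpow hk, ← map_pow, hfix, inv_pow, inv_mul_cancel]

theorem IsPGroup.fixes_of_autCommutator_eq_top [Finite G] [Fact p.Prime] (hG : IsPGroup p G)
    {φ : Q →* MulAut G} (htop : autCommutator φ = ⊤)
    (hchar : ∀ N : Subgroup G, N.Characteristic → N ≠ ⊤ → ∀ σ, ∀ x ∈ N, φ σ x = x)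
    (hfix : ∀ x ∈ autCommutator φ, x ^ (if p = 2 then 4 else p) = 1 → ∀ σ, φ σ x = x)
    (σ : Q) (g : G) : φ σ g = g := by
  rcases subsingleton_or_nontrivial G with _ | _
  · exact Subsingleton.elim _ _
  have hcentral : ∀ N : Subgroup G, N.Characteristic → N ≠ ⊤ → N ≤ center G := fun N _ hN =>
    centralizer_eq_top_iff_subset.mp
      (top_le_iff.mp (htop ▸ autCommutator_le_centralizer (hchar N ‹_› hN)))
  have := hG.isNilpotent
  have hcomm : commutator G ≤ center G :=
    hcentral _ inferInstance (Group.IsSolvable.commutator_lt_top_of_nontrivial G).ne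
  set P := closure (Set.range (· ^ p : G → G))
  have hPchar : P.Characteristic := characteristic_closure fun ϕ => by
    rintro _ ⟨x, rfl⟩
    exact ⟨ϕ x, (map_pow ϕ x p).symm⟩
  have hP : P ≠ ⊤ := hG.closure_range_pow_ne_top
  have hpow : ∀ x : G, x ^ p ∈ center G := fun x => hcentral P hPchar hP (subset_closure ⟨x, rfl⟩)
  have hexp := pow_eq_one_of_mem_autCommutator hcomm hpow (Fact.out : p.Prime).dvd_choose_two_ite
    fun τ x => by
      obtain ⟨t, ht⟩ : p ∣ if p = 2 then 4 else p := by split_ifs with h <;> simp [h]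
      rw [ht, pow_mul, map_pow, hchar P hPchar hP τ _ (subset_closure ⟨x, rfl⟩)]
  have hg : g ∈ autCommutator φ := htop ▸ mem_top g
  exact hfix g hg (hexp g hg) σ

theorem IsPGroup.fixes_of_fixes_pow_eq_one_of_mem_autCommutator [Finite G] [Fact p.Prime]
    (hG : IsPGroup p G) (φ : Q →* MulAut G) (hcop : (Nat.card Q).Coprime p)
    (hfix : ∀ x ∈ autCommutator φ, x ^ (if p = 2 then 4 else p) = 1 → ∀ σ, φ σ x = x)
    (σ : Q) (g : G) : φ σ g = g := by
  induction hn : Nat.card G using Nat.strong_induction_on generalizing G σ with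
  | _ n ih =>
  have hinvariant : ∀ M : Subgroup G, M ≠ ⊤ → (∀ τ, Set.MapsTo (φ τ) M M) →
      ∀ τ, ∀ x ∈ M, φ τ x = x := by
    intro M hM hMφ τ x hx
    obtain ⟨y, hy⟩ : ∃ y, y ∉ M := by simpa [eq_top_iff'] using hM
    have hfixM : ∀ z ∈ autCommutator (restrictMulAut φ M hMφ),
        z ^ (if p = 2 then 4 else p) = 1 → ∀ τ, restrictMulAut φ M hMφ τ z = z :=
      fun z hz hzk τ => Subtype.ext (hfix z (coe_mem_autCommutator_of_mem_restrict hz)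
        (by exact_mod_cast congrArg Subtype.val hzk) τ)
    exact congrArg Subtype.val (ih _ (hn ▸ Finite.card_subtype_lt hy) (hG.to_subgroup M)
      (restrictMulAut φ M hMφ) hfixM τ ⟨x, hx⟩ rfl)
  by_cases htop : autCommutator φ = ⊤
  · exact hG.fixes_of_autCommutator_eq_top htop
      (fun N _ hN => hinvariant N hN fun τ => Characteristic.mapsTo (φ τ)) hfix σ g
  · exact hG.fixes_of_fixes_autCommutator hcop (hinvariant _ htop (mapsTo_autCommutator φ)) σ g

end CoprimeAction

theorem stmt11_general {G Q : Type*} [Group G] [Group Q] [Finite G]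
    (p : ℕ) [Fact p.Prime] (hG : IsPGroup p G)
    (φ : Q →* MulAut G) (hφ : Function.Injective φ)
    (hcop : Nat.Coprime (Nat.card Q) p)
    (hfix : ∀ x ∈ Subgroup.closure {x : G | ∃ (g : G) (σ : Q), x = g⁻¹ * φ σ g},
      x ^ (if p = 2 then 4 else p) = 1 → ∀ σ : Q, φ σ x = x) :
    ∀ σ : Q, σ = 1 := by
  intro σ
  apply hφ
  ext g
  rw [map_one, MulAut.one_apply]
  exact hG.fixes_of_fixes_pow_eq_one_of_mem_autCommutator φ hcop hfix σ g

theorem stmt11 {G Q : Type*} [Group G] [Group Q] [Finite G] [Finite Q]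
    (p : ℕ) [Fact p.Prime] (hG : IsPGroup p G)
    (φ : Q →* MulAut G) (hφ : Function.Injective φ)
    (hcop : Nat.Coprime (Nat.card Q) p)
    (hfix : ∀ x ∈ Subgroup.closure {x : G | ∃ (g : G) (σ : Q), x = g⁻¹ * φ σ g},
      x ^ (if p = 2 then 4 else p) = 1 → ∀ σ : Q, φ σ x = x) :
    ∀ σ : Q, σ = 1 :=
  stmt11_general p hG φ hφ hcop hfix
end
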